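/- Let $\Omega$ be a commutative semigroup, $(L, [\cdot,\cdot]_{\alpha,\beta})_{\alpha,\beta\in\Omega}$ an $\Omega$-Lie algebra, and $(R_\alpha)_{\alpha\in\Omega}$ a Rota-Baxter family of weight $\lambda$ on $L$. Define $[x,y]'_{\alpha,\beta} := [R_\alpha(x), y]_{\alpha,\beta} + [x, R_\beta(y)]_{\alpha,\beta} + \lambda[x,y]_{\alpha,\beta}$. Then $(L, [\cdot,\cdot]'_{\alpha,\beta})_{\alpha,\beta\in\Omega}$ is an $\Omega$-Lie algebra. -/

import Mathlib

/-!
Expanding the cyclic sum of the derived bracket `[x, y]' = [R x, y] + [x, R y] + λ [x, y]`,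
the Rota-Baxter identity turns each `R ([y, z]')` into `[R y, R z]`, and what remains is the
sum of the Jacobi identities of the original bracket for the triples `(R x, R y, z)` and,
with coefficient `λ`, `(R x, y, z)`, together with their cyclic permutations, plus `λ²` times
the one for `(x, y, z)`.
-/

namespace OmegaLie

variable {K Ω L : Type*} [CommRing K] [AddCommGroup L] [Module K L]
  (br : Ω → Ω → L →ₗ[K] L →ₗ[K] L) (R : Ω → L →ₗ[K] L) (lam : K)

def rotaBaxterBracket (α β : Ω) (x y : L) : L :=
  br α β (R α x) y + br α β x (R β y) + lam • br α β x y

theorem rotaBaxterBracket_swap (hskew : ∀ (α β : Ω) (x y : L), br α β x y = - br β α y x)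
    (α β : Ω) (x y : L) :
    rotaBaxterBracket br R lam α β x y = - rotaBaxterBracket br R lam β α y x := by
  rw [rotaBaxterBracket, rotaBaxterBracket, hskew α β (R α x) y, hskew α β x (R β y),
    hskew α β x y]
  module

variable [Mul Ω]

theorem rotaBaxterBracket_rotaBaxterBracket
    (hRB : ∀ (α β : Ω) (x y : L),
      br α β (R α x) (R β y) = R (α * β) (rotaBaxterBracket br R lam α β x y))
    (α β γ : Ω) (x y z : L) :
    rotaBaxterBracket br R lam α (β * γ) x (rotaBaxterBracket br R lam β γ y z)
      = br α (β * γ) (R α x) (rotaBaxterBracket br R lam β γ y z)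
        + br α (β * γ) x (br β γ (R β y) (R γ z))
        + lam • br α (β * γ) x (rotaBaxterBracket br R lam β γ y z) := by
  rw [hRB, rotaBaxterBracket]

theorem rotaBaxterBracket_jacobi
    (hjac : ∀ (α β γ : Ω) (x y z : L),
      br α (β * γ) x (br β γ y z) + br β (γ * α) y (br γ α z x)
        + br γ (α * β) z (br α β x y) = 0)
    (hRB : ∀ (α β : Ω) (x y : L),
      br α β (R α x) (R β y) = R (α * β) (rotaBaxterBracket br R lam α β x y))
    (α β γ : Ω) (x y z : L) :
    rotaBaxterBracket br R lam α (β * γ) x (rotaBaxterBracket br R lam β γ y z)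
      + rotaBaxterBracket br R lam β (γ * α) y (rotaBaxterBracket br R lam γ α z x)
      + rotaBaxterBracket br R lam γ (α * β) z (rotaBaxterBracket br R lam α β x y) = 0 := by
  simp only [rotaBaxterBracket_rotaBaxterBracket br R lam hRB]
  simp only [rotaBaxterBracket, map_add, map_smul]
  linear_combination (norm := module)
    hjac α β γ (R α x) (R β y) z + hjac β γ α (R β y) (R γ z) x
      + hjac γ α β (R γ z) (R α x) y
      + lam • (hjac α β γ (R α x) y z + hjac β γ α (R β y) z x + hjac γ α β (R γ z) x y)
      + (lam * lam) • hjac α β γ x y z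

end OmegaLie

open OmegaLie in
/-- A Rota-Baxter family of weight λ on an Ω-Lie algebra induces a new Ω-Lie algebra. -/
theorem stmt_14
    {K : Type*} [Field K] {Ω : Type*} [CommSemigroup Ω]
    {L : Type*} [AddCommGroup L] [Module K L]
    (br : Ω → Ω → L →ₗ[K] L →ₗ[K] L)
    (lam : K)
    -- (L, br) is an Ω-Lie algebra
    (hskew : ∀ (α β : Ω) (x y : L), br α β x y = - br β α y x)
    (hjac : ∀ (α β γ : Ω) (x y z : L),
      br α (β * γ) x (br β γ y z) + br β (γ * α) y (br γ α z x)
        + br γ (α * β) z (br α β x y) = 0)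
    -- (R_α) is a Rota-Baxter family of weight λ
    (R : Ω → L →ₗ[K] L)
    (hRB : ∀ (α β : Ω) (x y : L),
      br α β (R α x) (R β y)
        = R (α * β) (br α β (R α x) y + br α β x (R β y) + lam • br α β x y))
    -- the new bracket
    (nbr : Ω → Ω → L → L → L)
    (hnbr : ∀ (α β : Ω) (x y : L),
      nbr α β x y = br α β (R α x) y + br α β x (R β y) + lam • br α β x y) :
    -- (L, nbr) is an Ω-Lie algebra
    (∀ (α β : Ω) (x y : L), nbr α β x y = - nbr β α y x) ∧
    (∀ (α β γ : Ω) (x y z : L),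
      nbr α (β * γ) x (nbr β γ y z) + nbr β (γ * α) y (nbr γ α z x)
        + nbr γ (α * β) z (nbr α β x y) = 0) := by
  obtain rfl : nbr = rotaBaxterBracket br R lam := by
    funext α β x y
    exact hnbr α β x y
  exact ⟨rotaBaxterBracket_swap br R lam hskew, rotaBaxterBracket_jacobi br R lam hjac hRB⟩
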